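/- Let I be a monotone one-in-three SAT instance with m clauses and n variables, let ε ∈ (0,1), and let J be the {0,1}-action linear influence game constructed from I and ε as described. Then J has a pure-strategy Nash equilibrium in which every clause player plays 1 if and only if I has a one-in-three solution. -/

import Mathlib

open Finset

/-- A pure-strategy Nash equilibrium of a `{0,1}`-action linear influence game. -/
def IsPSNE01 {P : Type*} [Fintype P] [DecidableEq P]
    (w : P → P → ℝ) (b : P → ℝ) (x : P → ℝ) : Prop :=
  (∀ p, x p = 0 ∨ x p = 1) ∧
    ∀ p, (2 * x p - 1) * ((∑ q ∈ univ.filter (· ≠ p), w q p * x q) - b p) ≥ 0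

/-- Weights of the `{0,1}`-action LIG built from a monotone one-in-three SAT instance:
weight `-1` between distinct variable players appearing together in some clause, weight `1`
from a variable player to each clause player whose clause contains it, and `0` otherwise. -/
def oitW (n m : ℕ) (V : Fin m → Finset (Fin n)) :
    Fin n ⊕ Fin m → Fin n ⊕ Fin m → ℝ
  | Sum.inl u, Sum.inl v => if u ≠ v ∧ ∃ k, u ∈ V k ∧ v ∈ V k then -1 else 0
  | Sum.inl i, Sum.inr k => if i ∈ V k then 1 else 0
  | _, _ => 0

/-- Thresholds of the `{0,1}`-action LIG built from a monotone one-in-three SAT instance: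
`0` for variable players and `ε` for clause players. -/
def oitB (n m : ℕ) (ε : ℝ) : Fin n ⊕ Fin m → ℝ
  | Sum.inl _ => 0
  | Sum.inr _ => ε

/-!
With all clause players at `1`, the variable players form a `0/1` profile `t`. A clause player
with threshold `ε ∈ (0,1)` is content iff its clause has at least one true variable, and a true
variable player is content iff no other variable sharing a clause with it is true (each such
neighbour pulls it down by `1`, and its threshold is `0`); a false variable player is always
content. Together these say that every clause has exactly one true variable.
-/

def influence {P : Type*} [Fintype P] [DecidableEq P] (w : P → P → ℝ) (x : P → ℝ) (p : P) : ℝ :=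
  ∑ q ∈ univ.filter (· ≠ p), w q p * x q

theorem isPSNE01_iff {P : Type*} [Fintype P] [DecidableEq P] (w : P → P → ℝ) (b x : P → ℝ) :
    IsPSNE01 w b x ↔ (∀ p, x p = 0 ∨ x p = 1) ∧
      ∀ p, (x p = 1 → b p ≤ influence w x p) ∧ (x p = 0 → influence w x p ≤ b p) := by
  refine and_congr_right fun hx01 => forall_congr' fun p => ?_
  rcases hx01 p with h | h <;> simp [h, influence]

theorem card_filter_eq_one_eq_sum {α : Type*} (s : Finset α) (t : α → ℝ)
    (ht : ∀ i, t i = 0 ∨ t i = 1) :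
    ((s.filter (t · = 1)).card : ℝ) = ∑ i ∈ s, t i := by
  rw [← sum_boole]
  refine sum_congr rfl fun i _ => ?_
  rcases ht i with h | h <;> simp [h]

/-- The variable players with weight `-1` towards `v`. -/
def clauseNeighbors {ι α : Type*} [Fintype ι] [Fintype α] [DecidableEq α]
    (V : ι → Finset α) (v : α) : Finset α :=
  univ.filter fun u => u ≠ v ∧ ∃ k, u ∈ V k ∧ v ∈ V k

section Game

variable {n m : ℕ} (V : Fin m → Finset (Fin n))

theorem influence_oitW_inr (x : Fin n ⊕ Fin m → ℝ) (k : Fin m) :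
    influence (oitW n m V) x (Sum.inr k) = ∑ i ∈ V k, x (Sum.inl i) := by
  rw [influence, sum_filter, Fintype.sum_sum_type]
  simp [oitW, ite_mul, sum_ite_mem]

theorem influence_oitW_inl (x : Fin n ⊕ Fin m → ℝ) (v : Fin n) :
    influence (oitW n m V) x (Sum.inl v) = -∑ u ∈ clauseNeighbors V v, x (Sum.inl u) := by
  rw [influence, clauseNeighbors, sum_filter, Fintype.sum_sum_type, sum_filter,
    ← sum_neg_distrib]
  simp only [oitW, ne_eq, reduceCtorEq, not_false_eq_true, zero_mul,
    ite_self, sum_const_zero, add_zero, Sum.inl.injEq]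
  refine sum_congr rfl fun u _ => ?_
  by_cases huv : u = v
  · simp [huv]
  · by_cases hk : ∃ k, u ∈ V k ∧ v ∈ V k <;> simp [huv, hk]

theorem isPSNE01_oit_elim_one_iff {t : Fin n → ℝ} (ht : ∀ i, t i = 0 ∨ t i = 1) (ε : ℝ) :
    IsPSNE01 (oitW n m V) (oitB n m ε) (Sum.elim t 1) ↔
      (∀ k, ε ≤ ∑ i ∈ V k, t i) ∧ ∀ v, t v = 1 → ∑ u ∈ clauseNeighbors V v, t u ≤ 0 := by
  have ht0 : ∀ i, 0 ≤ t i := fun i => by rcases ht i with h | h <;> simp [h]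
  simp only [isPSNE01_iff, Sum.forall, Sum.elim_inl, Sum.elim_inr, Pi.one_apply,
    influence_oitW_inl, influence_oitW_inr, oitB, ht, one_ne_zero, or_true, forall_const,
    true_and, and_true, neg_nonneg, neg_nonpos, sum_nonneg fun u _ => ht0 u, implies_true,
    false_implies]
  exact and_comm

end Game

theorem le_sum_iff_one_le_card_filter {α : Type*} (s : Finset α) {t : α → ℝ}
    (ht : ∀ i, t i = 0 ∨ t i = 1) {ε : ℝ} (hε0 : 0 < ε) (hε1 : ε ≤ 1) :
    ε ≤ ∑ i ∈ s, t i ↔ 1 ≤ (s.filter (t · = 1)).card := by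
  rw [← card_filter_eq_one_eq_sum s t ht]
  constructor
  · intro h
    exact_mod_cast Nat.one_le_iff_ne_zero.mpr fun h0 => by
      rw [h0, Nat.cast_zero] at h
      linarith
  · intro h
    exact hε1.trans (by exact_mod_cast h)

/-- Both conditions say that no two distinct true variables share a clause. -/
theorem forall_sum_clauseNeighbors_nonpos_iff {ι α : Type*} [Fintype ι] [Fintype α]
    [DecidableEq α] (V : ι → Finset α) {t : α → ℝ} (ht : ∀ i, t i = 0 ∨ t i = 1) :
    (∀ v, t v = 1 → ∑ u ∈ clauseNeighbors V v, t u ≤ 0) ↔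
      ∀ k, ((V k).filter (t · = 1)).card ≤ 1 := by
  have ht0 : ∀ i, 0 ≤ t i := fun i => by rcases ht i with h | h <;> simp [h]
  have hne : ∀ i, t i ≠ 1 ↔ t i = 0 := fun i => by rcases ht i with h | h <;> simp [h]
  have hsum : ∀ v, ∑ u ∈ clauseNeighbors V v, t u ≤ 0 ↔
      ∀ u ∈ clauseNeighbors V v, t u = 0 := fun v => by
    rw [← sum_eq_zero_iff_of_nonneg fun u _ => ht0 u]
    exact ⟨fun h => h.antisymm (sum_nonneg fun u _ => ht0 u), le_of_eq⟩
  simp only [hsum]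
  simp only [card_le_one, clauseNeighbors, mem_filter, mem_univ, true_and, ← hne]
  constructor
  · rintro h k a ⟨ha, ha1⟩ b ⟨hb, hb1⟩
    by_contra hab
    exact h b hb1 a ⟨hab, k, ha, hb⟩ ha1
  · rintro h v hv1 u ⟨huv, k, hu, hv⟩ hu1
    exact huv (h k u ⟨hu, hu1⟩ v ⟨hv, hv1⟩)

theorem oneInThree_lig_psne_iff_general (n m : ℕ)
    (V : Fin m → Finset (Fin n))
    (ε : ℝ) (hε0 : 0 < ε) (hε1 : ε < 1) :
    (∃ x : Fin n ⊕ Fin m → ℝ,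
        IsPSNE01 (oitW n m V) (oitB n m ε) x ∧ ∀ k : Fin m, x (Sum.inr k) = 1)
      ↔
    (∃ t : Fin n → ℝ, (∀ i, t i = 0 ∨ t i = 1) ∧
        ∀ k : Fin m, ((V k).filter (fun i => t i = 1)).card = 1) := by
  have key : ∀ t : Fin n → ℝ, (∀ i, t i = 0 ∨ t i = 1) →
      (IsPSNE01 (oitW n m V) (oitB n m ε) (Sum.elim t 1) ↔
        ∀ k, ((V k).filter (fun i => t i = 1)).card = 1) := fun t ht => by
    simp only [isPSNE01_oit_elim_one_iff V ht,
      le_sum_iff_one_le_card_filter _ ht hε0 hε1.le,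
      forall_sum_clauseNeighbors_nonpos_iff V ht, ← forall_and, ← le_antisymm_iff, eq_comm]
  constructor
  · rintro ⟨x, hx, hclause⟩
    have hx_eq : x = Sum.elim (x ∘ Sum.inl) 1 := by
      ext (i | k)
      · rfl
      · exact hclause k
    have ht : ∀ i, x (Sum.inl i) = 0 ∨ x (Sum.inl i) = 1 := fun i => hx.1 _
    exact ⟨_, ht, (key _ ht).mp (hx_eq ▸ hx)⟩
  · rintro ⟨t, ht, hcard⟩
    exact ⟨Sum.elim t 1, (key t ht).mpr hcard, fun _ => rfl⟩

/-- The LIG built from a monotone one-in-three SAT instance has a PSNE in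
which every clause player plays 1 iff the instance has a one-in-three solution (a truth
assignment making exactly one variable true in every clause). -/
theorem oneInThree_lig_psne_iff (n m : ℕ)
    (V : Fin m → Finset (Fin n)) (hV : ∀ k, (V k).card = 3)
    (ε : ℝ) (hε0 : 0 < ε) (hε1 : ε < 1) :
    (∃ x : Fin n ⊕ Fin m → ℝ,
        IsPSNE01 (oitW n m V) (oitB n m ε) x ∧ ∀ k : Fin m, x (Sum.inr k) = 1)
      ↔
    (∃ t : Fin n → ℝ, (∀ i, t i = 0 ∨ t i = 1) ∧
        ∀ k : Fin m, ((V k).filter (fun i => t i = 1)).card = 1) :=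
  oneInThree_lig_psne_iff_general n m V ε hε0 hε1
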